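/- arXiv:1711.05381 — 3 statements merged into one kernel-verified Lean document; each statement's English description precedes it below -/
import Mathlib

section
/- Let ν be a real-valued random variable with E[ν] = 0, σ² = E[ν²] < ∞, and v_κ = E[|ν|^κ] < ∞ for some κ > 2. Then for every τ > 0, |E[(ℓ'_τ(ν))²] − σ²| ≤ 2 v_κ / ((κ−2) τ^{κ−2}), where ℓ'_τ(u) = max(−τ, min(τ, u)). -/
/-!
Since `ℓ'_τ(u)² = min(τ², u²)`, the difference `E[ν²] − E[ℓ'_τ(ν)²] = E[(ν² − τ²)₊]` is nonnegative.
On `|u| > τ`, Bernoulli's inequality for the exponent `κ/2` applied to `(u/τ)²` gives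
`u² − τ² ≤ (2/κ) |u|^κ / τ^(κ−2)`, and `2/κ ≤ 2/(κ−2)`.
-/

open MeasureTheory Real

def huberScore (τ u : ℝ) : ℝ := max (-τ) (min τ u)

lemma abs_huberScore {τ : ℝ} (hτ : 0 ≤ τ) (u : ℝ) : |huberScore τ u| = min τ |u| := by
  unfold huberScore
  rcases le_total u (-τ) with h | h
  · rw [min_eq_right (by linarith), max_eq_left h, abs_neg, abs_of_nonneg hτ,
      abs_of_nonpos (by linarith), min_eq_left (by linarith)]
  rcases le_total u τ with h' | h'
  · rw [min_eq_right h', max_eq_right h, min_eq_right (abs_le.2 ⟨h, h'⟩)]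
  · rw [min_eq_left h', max_eq_right (by linarith), abs_of_nonneg hτ,
      abs_of_nonneg (by linarith), min_eq_left h']

lemma huberScore_sq {τ : ℝ} (hτ : 0 ≤ τ) (u : ℝ) : huberScore τ u ^ 2 = min (τ ^ 2) (u ^ 2) := by
  rw [← sq_abs, abs_huberScore hτ, ← sq_abs u]
  rcases le_total τ |u| with h | h
  · rw [min_eq_left h, min_eq_left (pow_le_pow_left₀ hτ h 2)]
  · rw [min_eq_right h, min_eq_right (pow_le_pow_left₀ (abs_nonneg u) h 2)]

lemma huberScore_sq_le_sq {τ : ℝ} (hτ : 0 ≤ τ) (u : ℝ) : huberScore τ u ^ 2 ≤ u ^ 2 :=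
  (huberScore_sq hτ u).trans_le (min_le_right _ _)

lemma sub_one_le_rpow_sub_one_div {y p : ℝ} (hy : 0 ≤ y) (hp : 1 ≤ p) :
    y - 1 ≤ (y ^ p - 1) / p := by
  have h := one_add_mul_self_le_rpow_one_add (s := y - 1) (by linarith) hp
  rw [add_sub_cancel] at h
  rw [le_div_iff₀ (by linarith)]
  linarith

lemma sq_sub_sq_le_rpow_div {x τ κ : ℝ} (hx : 0 ≤ x) (hτ : 0 < τ) (hκ : 2 ≤ κ) :
    x ^ 2 - τ ^ 2 ≤ 2 / κ * x ^ κ / τ ^ (κ - 2) := by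
  have hxτ : 0 ≤ x / τ := div_nonneg hx hτ.le
  have hbern : (x / τ) ^ 2 - 1 ≤ 2 / κ * (x / τ) ^ κ := by
    have h := sub_one_le_rpow_sub_one_div (sq_nonneg (x / τ)) (p := κ / 2) (by linarith)
    rw [← rpow_natCast_mul hxτ, Nat.cast_ofNat, mul_div_cancel₀ κ two_ne_zero] at h
    calc (x / τ) ^ 2 - 1 ≤ ((x / τ) ^ κ - 1) / (κ / 2) := h
      _ = 2 / κ * ((x / τ) ^ κ - 1) := by field_simp
      _ ≤ 2 / κ * (x / τ) ^ κ := by gcongr; linarith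
  calc x ^ 2 - τ ^ 2 = τ ^ 2 * ((x / τ) ^ 2 - 1) := by field_simp
    _ ≤ τ ^ 2 * (2 / κ * (x / τ) ^ κ) := by gcongr
    _ = 2 / κ * x ^ κ / τ ^ (κ - 2) := by
      rw [div_rpow hx hτ.le, rpow_sub hτ, rpow_two]
      field_simp

lemma sq_sub_huberScore_sq_le {τ κ : ℝ} (hτ : 0 < τ) (hκ : 2 ≤ κ) (u : ℝ) :
    u ^ 2 - huberScore τ u ^ 2 ≤ 2 / κ * |u| ^ κ / τ ^ (κ - 2) := by
  rw [huberScore_sq hτ.le]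
  rcases le_total (τ ^ 2) (u ^ 2) with h | h
  · rw [min_eq_left h, ← sq_abs u]
    exact sq_sub_sq_le_rpow_div (abs_nonneg u) hτ hκ
  · rw [min_eq_right h, sub_self]
    have : 0 < κ := by linarith
    positivity

theorem huber_score_second_moment_general {Ω : Type*} [MeasurableSpace Ω]
    (μ : Measure Ω)
    (ν : Ω → ℝ) (κ τ : ℝ) (hκ : 2 < κ) (hτ : 0 < τ)
    (h2int : Integrable (fun ω => (ν ω) ^ 2) μ)
    (hκint : Integrable (fun ω => |ν ω| ^ κ) μ) :
    |(∫ ω, (max (-τ) (min τ (ν ω))) ^ 2 ∂μ) - ∫ ω, (ν ω) ^ 2 ∂μ|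
      ≤ 2 * (∫ ω, |ν ω| ^ κ ∂μ) / ((κ - 2) * τ ^ (κ - 2)) := by
  change |∫ ω, huberScore τ (ν ω) ^ 2 ∂μ - _| ≤ _
  have hscore_int : Integrable (fun ω => huberScore τ (ν ω) ^ 2) μ := by
    refine h2int.mono' ?_ (ae_of_all _ fun ω => ?_)
    · simp_rw [huberScore_sq hτ.le]
      exact (continuous_const.min continuous_id).comp_aestronglyMeasurable h2int.1
    · rw [Real.norm_of_nonneg (sq_nonneg _)]
      exact huberScore_sq_le_sq hτ.le _
  have hκ₀ : 0 < κ - 2 := by linarith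
  have hmoment : 0 ≤ ∫ ω, |ν ω| ^ κ ∂μ := integral_nonneg fun ω => by positivity
  refine abs_sub_le_iff.2 ⟨?_, ?_⟩
  · have hrhs : 0 ≤ 2 * (∫ ω, |ν ω| ^ κ ∂μ) / ((κ - 2) * τ ^ (κ - 2)) := by positivity
    have := integral_mono hscore_int h2int fun ω => huberScore_sq_le_sq hτ.le (ν ω)
    linarith
  · rw [← integral_sub h2int hscore_int]
    calc ∫ ω, (ν ω ^ 2 - huberScore τ (ν ω) ^ 2) ∂μ
        ≤ ∫ ω, 2 / κ * |ν ω| ^ κ / τ ^ (κ - 2) ∂μ :=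
          integral_mono (h2int.sub hscore_int) ((hκint.const_mul _).div_const _)
            fun ω => sq_sub_huberScore_sq_le hτ hκ.le (ν ω)
      _ = 2 / κ * (∫ ω, |ν ω| ^ κ ∂μ) / τ ^ (κ - 2) := by
          rw [integral_div, integral_const_mul]
      _ ≤ 2 / (κ - 2) * (∫ ω, |ν ω| ^ κ ∂μ) / τ ^ (κ - 2) := by
          gcongr
          linarith
      _ = 2 * (∫ ω, |ν ω| ^ κ ∂μ) / ((κ - 2) * τ ^ (κ - 2)) := by
          field_simp

theorem huber_score_second_moment {Ω : Type*} [MeasurableSpace Ω]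
    (μ : Measure Ω) [IsProbabilityMeasure μ]
    (ν : Ω → ℝ) (κ τ : ℝ) (hκ : 2 < κ) (hτ : 0 < τ)
    (hmeas : Measurable ν) (hint : Integrable ν μ)
    (hmean : ∫ ω, ν ω ∂μ = 0)
    (h2int : Integrable (fun ω => (ν ω) ^ 2) μ)
    (hκint : Integrable (fun ω => |ν ω| ^ κ) μ) :
    |(∫ ω, (max (-τ) (min τ (ν ω))) ^ 2 ∂μ) - ∫ ω, (ν ω) ^ 2 ∂μ|
      ≤ 2 * (∫ ω, |ν ω| ^ κ ∂μ) / ((κ - 2) * τ ^ (κ - 2)) :=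
  huber_score_second_moment_general μ ν κ τ hκ hτ h2int hκint
end

section
/- Let L : ℝ^d → ℝ be a convex differentiable function, and for β₁, β₂ ∈ ℝ^d define D_L(β₁, β₂) = L(β₁) − L(β₂) − ⟨∇L(β₂), β₁ − β₂⟩ and the symmetrized Bregman divergence D̄_L(β₁, β₂) = D_L(β₁, β₂) + D_L(β₂, β₁) = ⟨∇L(β₁) − ∇L(β₂), β₁ − β₂⟩. Then for any β, β* ∈ ℝ^d and η ∈ (0, 1], setting β_η = β* + η(β − β*), one has D̄_L(β_η, β*) ≤ η · D̄_L(β, β*). -/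
open scoped RealInnerProductSpace

/-
The restriction `φ t = L (βs + t • (β - βs))` of `L` to the line through `βs` and `β` is a convex
function of one real variable with derivative `φ' t = ⟪∇L (βs + t • (β - βs)), β - βs⟫`, so `φ'` is
monotone. The left-hand side equals `η * (φ' η - φ' 0)` and the right-hand side `η * (φ' 1 - φ' 0)`,
and `η ≤ 1`.
-/

section

variable {E : Type*} [NormedAddCommGroup E] [InnerProductSpace ℝ E] [CompleteSpace E]

theorem HasGradientAt.hasDerivAt_comp_add_smul {f : E → ℝ} {f' x d : E} {t : ℝ}
    (hf : HasGradientAt f f' (x + t • d)) :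
    HasDerivAt (fun s : ℝ => f (x + s • d)) ⟪f', d⟫ t := by
  have hline : HasDerivAt (fun s : ℝ => x + s • d) d t := by
    simpa using ((hasDerivAt_id t).smul_const d).const_add x
  have := hf.hasFDerivAt.comp_hasDerivAt t hline
  simp only [Function.comp_def, InnerProductSpace.toDual_apply_apply] at this
  exact this

theorem ConvexOn.monotone_inner_gradient_along_line {L : E → ℝ} {g : E → E}
    (hconv : ConvexOn ℝ Set.univ L) (hgrad : ∀ x, HasGradientAt L (g x) x) (x d : E) :
    Monotone fun t : ℝ => ⟪g (x + t • d), d⟫ := by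
  have hderiv (t : ℝ) : HasDerivAt (fun s : ℝ => L (x + s • d)) ⟪g (x + t • d), d⟫ t :=
    (hgrad _).hasDerivAt_comp_add_smul
  have hφ : ConvexOn ℝ Set.univ fun s : ℝ => L (x + s • d) := by
    simpa [Function.comp_def, AffineMap.lineMap_apply_module', add_comm]
      using hconv.comp_affineMap (AffineMap.lineMap x (x + d))
  intro s t hst
  simpa only [(hderiv _).deriv] using
    hφ.monotoneOn_deriv (fun r _ => (hderiv r).differentiableAt) trivial trivial hst

end

theorem symmetrized_bregman_localization
    {E : Type*} [NormedAddCommGroup E] [InnerProductSpace ℝ E] [CompleteSpace E]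
    (L : E → ℝ) (g : E → E)
    (hconv : ConvexOn ℝ Set.univ L)
    (hgrad : ∀ x, HasGradientAt L (g x) x)
    (β βs : E) (η : ℝ) (hη : η ∈ Set.Ioc (0 : ℝ) 1) :
    ⟪g (βs + η • (β - βs)) - g βs, (βs + η • (β - βs)) - βs⟫
      ≤ η * ⟪g β - g βs, β - βs⟫ := by
  have key : ⟪g (βs + η • (β - βs)), β - βs⟫ ≤ ⟪g β, β - βs⟫ := by
    simpa using hconv.monotone_inner_gradient_along_line hgrad βs (β - βs) hη.2
  rw [add_sub_cancel_left, real_inner_smul_right, inner_sub_left, inner_sub_left]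
  exact mul_le_mul_of_nonneg_left (by linarith) hη.1.le
end

section
/- Let G be a standard normal random variable, z ≥ 1, and 0 < δ < z. Then P(|G| ≥ z − δ) − P(|G| ≥ z) ≤ P(|G| ≥ z) · (1 + z) · δ · e^{zδ}. -/
/-!
On the annulus `z - δ ≤ |x| < z` we have `z² - x² ≤ 2zδ`, so the standard normal density `φ` is
at most `φ(z) e^{zδ}` there; the annulus has Lebesgue measure at most `2δ`, hence
`P(|G| ≥ z - δ) - P(|G| ≥ z) ≤ 2δ φ(z) e^{zδ}`. The Mills-ratio lower bound
`∫_z^∞ e^{-x²/2} dx ≥ z / (1 + z²) e^{-z²/2}` gives `P(|G| ≥ z) ≥ 2z / (1 + z²) φ(z)`, which is at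
least `2φ(z) / (1 + z)` when `z ≥ 1`.
-/

open MeasureTheory ProbabilityTheory

noncomputable def gaussTail (z : ℝ) : ℝ := (gaussianReal 0 1 {x : ℝ | z ≤ |x|}).toReal

open Set Filter Real Topology

lemma gaussianPDFReal_zero_one (x : ℝ) :
    gaussianPDFReal 0 1 x = (√(2 * π))⁻¹ * exp (-x ^ 2 / 2) := by
  simp [gaussianPDFReal]

lemma integrable_exp_neg_sq_div_two : Integrable fun x : ℝ => exp (-x ^ 2 / 2) := by
  simpa [neg_div, div_eq_inv_mul] using integrable_exp_neg_mul_sq (b := 1 / 2) (by norm_num)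

lemma hasDerivAt_div_one_add_sq_mul_exp (t : ℝ) :
    HasDerivAt (fun t => t / (1 + t ^ 2) * exp (-t ^ 2 / 2))
      (-(1 - 2 / (1 + t ^ 2) ^ 2) * exp (-t ^ 2 / 2)) t := by
  have hden : (1 : ℝ) + t ^ 2 ≠ 0 := by positivity
  have hexp : HasDerivAt (fun t : ℝ => exp (-t ^ 2 / 2)) (-t * exp (-t ^ 2 / 2)) t := by
    refine ((hasDerivAt_pow 2 t).fun_neg.div_const 2).exp.congr_deriv ?_
    simp only [Nat.cast_ofNat]
    ring
  refine (((hasDerivAt_id' t).fun_div ((hasDerivAt_pow 2 t).const_add 1) hden).fun_mul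
    hexp).congr_deriv ?_
  simp only [Nat.cast_ofNat]
  field_simp
  ring

lemma tendsto_div_one_add_sq_mul_exp_atTop :
    Tendsto (fun t : ℝ => t / (1 + t ^ 2) * exp (-t ^ 2 / 2)) atTop (𝓝 0) := by
  have hexp : Tendsto (fun t : ℝ => exp (-t ^ 2 / 2)) atTop (𝓝 0) :=
    tendsto_exp_atBot.comp <|
      (tendsto_neg_atBot_iff.mpr (tendsto_pow_atTop two_ne_zero)).atBot_div_const two_pos
  refine squeeze_zero' ?_ ?_ hexp
  · filter_upwards [eventually_ge_atTop 0] with t ht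
    positivity
  · filter_upwards [eventually_ge_atTop 0] with t ht
    have : t / (1 + t ^ 2) ≤ 1 := (div_le_one (by positivity)).mpr (by nlinarith)
    exact mul_le_of_le_one_left (exp_pos _).le this

/-- The derivative of `-t / (1 + t²) e^{-t²/2}` is `(1 - 2 / (1 + t²)²) e^{-t²/2} ≤ e^{-t²/2}`. -/
lemma div_one_add_sq_mul_exp_le_integral_Ioi (z : ℝ) :
    z / (1 + z ^ 2) * exp (-z ^ 2 / 2) ≤ ∫ x in Ioi z, exp (-x ^ 2 / 2) := by
  set g' : ℝ → ℝ := fun t => -(1 - 2 / (1 + t ^ 2) ^ 2) * exp (-t ^ 2 / 2)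
  have hg'_cont : Continuous g' := by
    refine .mul (.neg (.sub continuous_const (.div continuous_const (by fun_prop) fun t => ?_)))
      (by fun_prop)
    positivity
  have hg'_int : Integrable g' := by
    refine integrable_exp_neg_sq_div_two.mono hg'_cont.aestronglyMeasurable
      (ae_of_all _ fun t => ?_)
    have h₀ : (0 : ℝ) ≤ 2 / (1 + t ^ 2) ^ 2 := by positivity
    have h₂ : 2 / (1 + t ^ 2) ^ 2 ≤ (2 : ℝ) :=
      div_le_self zero_le_two (one_le_pow₀ (le_add_of_nonneg_right (sq_nonneg t)))
    rw [norm_mul, norm_neg]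
    exact mul_le_of_le_one_left (norm_nonneg _) (abs_le.mpr ⟨by linarith, by linarith⟩)
  have hFTC := integral_Ioi_of_hasDerivAt_of_tendsto
    (hasDerivAt_div_one_add_sq_mul_exp z).continuousAt.continuousWithinAt
    (fun t _ => hasDerivAt_div_one_add_sq_mul_exp t) hg'_int.integrableOn
    tendsto_div_one_add_sq_mul_exp_atTop
  calc z / (1 + z ^ 2) * exp (-z ^ 2 / 2) = ∫ t in Ioi z, -g' t := by
        rw [integral_neg, hFTC]; ring
    _ ≤ ∫ x in Ioi z, exp (-x ^ 2 / 2) := by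
        refine setIntegral_mono hg'_int.neg.integrableOn integrable_exp_neg_sq_div_two.integrableOn
          fun t => ?_
        have : 0 ≤ 2 / (1 + t ^ 2) ^ 2 := by positivity
        simp only [g']
        nlinarith [exp_pos (-t ^ 2 / 2)]

lemma gaussianReal_real_apply (μ : ℝ) {v : NNReal} (hv : v ≠ 0) (s : Set ℝ) :
    (gaussianReal μ v).real s = ∫ x in s, gaussianPDFReal μ v x := by
  rw [measureReal_def, gaussianReal_apply_eq_integral μ hv,
    ENNReal.toReal_ofReal (integral_nonneg (gaussianPDFReal_nonneg μ v))]

lemma gaussTail_eq_two_mul_integral_Ioi {t : ℝ} (ht : 0 < t) :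
    gaussTail t = 2 * ∫ x in Ioi t, gaussianPDFReal 0 1 x := by
  have hset : {x : ℝ | t ≤ |x|} = Iic (-t) ∪ Ici t := by
    ext x
    simp only [mem_ofPred_eq, mem_union, mem_Iic, mem_Ici, le_abs, le_neg]
    tauto
  have hsymm : ∫ x in Iic (-t), gaussianPDFReal 0 1 x = ∫ x in Ioi t, gaussianPDFReal 0 1 x := by
    simpa [gaussianPDFReal_zero_one] using integral_comp_neg_Iic (-t) (gaussianPDFReal 0 1)
  rw [gaussTail, ← measureReal_def, hset,
    measureReal_union (Iic_disjoint_Ici.mpr (by linarith)) measurableSet_Ici,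
    gaussianReal_real_apply 0 one_ne_zero, gaussianReal_real_apply 0 one_ne_zero, hsymm,
    integral_Ici_eq_integral_Ioi]
  ring

lemma two_mul_gaussianPDFReal_le_mul_gaussTail {z : ℝ} (hz : 1 ≤ z) :
    2 * gaussianPDFReal 0 1 z ≤ (1 + z) * gaussTail z := by
  have hz₀ : 0 < z := by linarith
  have hmills : 2 * z / (1 + z ^ 2) * gaussianPDFReal 0 1 z ≤ gaussTail z := by
    rw [gaussTail_eq_two_mul_integral_Ioi hz₀]
    simp only [gaussianPDFReal_zero_one, integral_const_mul]
    have hgordon := div_one_add_sq_mul_exp_le_integral_Ioi z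
    have hc : 0 ≤ (√(2 * π))⁻¹ := by positivity
    calc 2 * z / (1 + z ^ 2) * ((√(2 * π))⁻¹ * exp (-z ^ 2 / 2))
        = 2 * ((√(2 * π))⁻¹ * (z / (1 + z ^ 2) * exp (-z ^ 2 / 2))) := by ring
      _ ≤ _ := by gcongr
  have hratio : 1 ≤ (1 + z) * (z / (1 + z ^ 2)) := by
    rw [mul_div_assoc', le_div_iff₀ (by positivity)]
    nlinarith
  calc 2 * gaussianPDFReal 0 1 z
      ≤ (1 + z) * (z / (1 + z ^ 2)) * (2 * gaussianPDFReal 0 1 z) :=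
        le_mul_of_one_le_left (by positivity [gaussianPDFReal_nonneg 0 1 z]) hratio
    _ = (1 + z) * (2 * z / (1 + z ^ 2) * gaussianPDFReal 0 1 z) := by ring
    _ ≤ (1 + z) * gaussTail z := by gcongr

lemma gaussianPDFReal_le_mul_exp {x z δ : ℝ} (h₁ : z - δ ≤ |x|) (h₂ : |x| ≤ z) :
    gaussianPDFReal 0 1 x ≤ gaussianPDFReal 0 1 z * exp (z * δ) := by
  have : z ^ 2 - x ^ 2 ≤ 2 * z * δ := by
    rw [← sq_abs x]
    nlinarith [abs_nonneg x]
  rw [gaussianPDFReal_zero_one, gaussianPDFReal_zero_one, mul_assoc, ← exp_add]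
  gcongr
  linarith

lemma volume_real_abs_mem_Ico_le {a b : ℝ} (hab : a ≤ b) :
    volume.real {x : ℝ | a ≤ |x| ∧ |x| < b} ≤ 2 * (b - a) := by
  have hsub : {x : ℝ | a ≤ |x| ∧ |x| < b} ⊆ Ico a b ∪ Ioc (-b) (-a) := by
    intro x ⟨ha, hb⟩
    rcases le_total 0 x with hx | hx
    · rw [abs_of_nonneg hx] at ha hb
      exact Or.inl ⟨ha, hb⟩
    · rw [abs_of_nonpos hx] at ha hb
      exact Or.inr ⟨by linarith, by linarith⟩
  calc volume.real {x : ℝ | a ≤ |x| ∧ |x| < b}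
      ≤ volume.real (Ico a b) + volume.real (Ioc (-b) (-a)) :=
        (measureReal_mono hsub (measure_union_lt_top measure_Ico_lt_top measure_Ioc_lt_top).ne
          |>.trans (measureReal_union_le _ _))
    _ = 2 * (b - a) := by
        rw [Real.volume_real_Ico_of_le hab, Real.volume_real_Ioc_of_le (neg_le_neg hab)]
        ring

lemma gaussTail_sub_le {z δ : ℝ} (hδ : 0 ≤ δ) :
    gaussTail (z - δ) - gaussTail z ≤ 2 * δ * gaussianPDFReal 0 1 z * exp (z * δ) := by
  set A := {x : ℝ | z - δ ≤ |x| ∧ |x| < z}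
  have hA : A = {x : ℝ | z - δ ≤ |x|} \ {x : ℝ | z ≤ |x|} := by
    ext x
    simp [A]
  have hmeas : MeasurableSet {x : ℝ | z ≤ |x|} := measurableSet_le measurable_const measurable_abs
  have hsub : {x : ℝ | z ≤ |x|} ⊆ {x : ℝ | z - δ ≤ |x|} := fun x hx => by
    simp only [mem_ofPred_eq] at hx ⊢
    linarith
  calc gaussTail (z - δ) - gaussTail z = ∫ x in A, gaussianPDFReal 0 1 x := by
        rw [← gaussianReal_real_apply 0 one_ne_zero, hA, measureReal_sdiff hsub hmeas]
        rfl
    _ ≤ gaussianPDFReal 0 1 z * exp (z * δ) * volume.real A := by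
        refine (Real.le_norm_self _).trans (norm_setIntegral_le_of_norm_le_const ?_ fun x hx => ?_)
        · exact (measure_mono fun x hx => abs_le.mp hx.2.le).trans_lt measure_Icc_lt_top
        · rw [Real.norm_of_nonneg (gaussianPDFReal_nonneg 0 1 x)]
          exact gaussianPDFReal_le_mul_exp hx.1 hx.2.le
    _ ≤ gaussianPDFReal 0 1 z * exp (z * δ) * (2 * (z - (z - δ))) := by
        gcongr
        · positivity [gaussianPDFReal_nonneg 0 1 z]
        · exact volume_real_abs_mem_Ico_le (by linarith)
    _ = 2 * δ * gaussianPDFReal 0 1 z * exp (z * δ) := by ring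

theorem gaussian_tail_perturbation_lower_general (z δ : ℝ) (hz : 1 ≤ z) (hδ : 0 < δ) :
    gaussTail (z - δ) - gaussTail z
      ≤ gaussTail z * (1 + z) * δ * Real.exp (z * δ) :=
  calc gaussTail (z - δ) - gaussTail z
      ≤ δ * exp (z * δ) * (2 * gaussianPDFReal 0 1 z) := by
        linarith [gaussTail_sub_le (z := z) hδ.le]
    _ ≤ δ * exp (z * δ) * ((1 + z) * gaussTail z) :=
        mul_le_mul_of_nonneg_left (two_mul_gaussianPDFReal_le_mul_gaussTail hz) (by positivity)
    _ = gaussTail z * (1 + z) * δ * Real.exp (z * δ) := by ring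

theorem gaussian_tail_perturbation_lower (z δ : ℝ) (hz : 1 ≤ z) (hδ : 0 < δ) (hδz : δ < z) :
    gaussTail (z - δ) - gaussTail z
      ≤ gaussTail z * (1 + z) * δ * Real.exp (z * δ) :=
  gaussian_tail_perturbation_lower_general z δ hz hδ
end
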